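/- arXiv:1509.07716 — 6 statements merged into one kernel-verified Lean document; each statement's English description precedes it below -/
import Mathlib

section
/- Let G be a bipartite graph with bipartition (A,B) and let X ⊆ V(G) with |X| ≤ 3. If some proper precoloring of X with colors {1,2,3} does not extend to a proper 3-coloring of G, then X = {x,y,z} for three distinct vertices all lying on the same side of the bipartition, the three vertices receive pairwise distinct colors in the precoloring, and every pair of vertices in {x,y,z} has a common neighbor in G. -/
open Classical in
/-- If `x` and `y` (on the same side, with `z`) have no common neighbor, we can build a
proper 3-coloring agreeing with `c` at `x, y, z`. -/
private lemma aux_ext {V : Type*} [DecidableEq V] (G : SimpleGraph V) (c : V → Fin 3)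
    (P : V → Prop) (hP : ∀ u v, G.Adj u v → (P u ↔ ¬ P v))
    (x y z : V) (hx : P x) (hy : P y) (hz : P z)
    (cxy : c x ≠ c y) (cyz : c y ≠ c z) (cxz : c x ≠ c z)
    (hcom : ¬ ∃ w, G.Adj x w ∧ G.Adj y w) :
    ∃ f : V → Fin 3, (∀ u v, G.Adj u v → f u ≠ f v) ∧ f x = c x ∧ f y = c y ∧ f z = c z := by
  have hxy : x ≠ y := fun h => cxy (by rw [h])
  have hxz : x ≠ z := fun h => cxz (by rw [h])
  have hyz : y ≠ z := fun h => cyz (by rw [h])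
  refine ⟨fun v => if v = x then c x else if v = y then c y else if P v then c z
    else if G.Adj x v then c y else c x, ?_, by simp, by simp [hxy.symm],
    by simp [hxz.symm, hyz.symm, hz]⟩
  have claim : ∀ u v, G.Adj u v → P u →
      (if u = x then c x else if u = y then c y else if P u then c z
        else if G.Adj x u then c y else c x) ≠
      (if v = x then c x else if v = y then c y else if P v then c z
        else if G.Adj x v then c y else c x) := by
    intro u v hadj hu
    have hv : ¬ P v := (hP u v hadj).mp hu
    have hvx : v ≠ x := fun h => hv (h ▸ hx)
    have hvy : v ≠ y := fun h => hv (h ▸ hy)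
    rw [if_neg hvx, if_neg hvy, if_neg hv]
    by_cases hux : u = x
    · subst hux
      rw [if_pos rfl, if_pos hadj]
      exact cxy
    · by_cases huy : u = y
      · subst huy
        have hnadj : ¬ G.Adj x v := fun h => hcom ⟨v, h, hadj⟩
        rw [if_neg hux, if_pos rfl, if_neg hnadj]
        exact cxy.symm
      · rw [if_neg hux, if_neg huy, if_pos hu]
        by_cases hxa : G.Adj x v
        · rw [if_pos hxa]; exact cyz.symm
        · rw [if_neg hxa]; exact cxz.symm
  intro u v hadj
  by_cases hu : P u
  · exact claim u v hadj hu
  · have hv : P v := by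
      by_contra hv
      exact hv ((hP v u hadj.symm).mpr hu)
    exact (claim v u hadj.symm hv).symm

/-- One-side case: if `X` has 3 vertices, all on side `S`, colored injectively, and the
coloring does not extend, then we get the full conclusion relative to `S`. -/
private lemma aux_side {V : Type*} [DecidableEq V] (G : SimpleGraph V) (c : V → Fin 3)
    (X : Finset V) (S : Set V) (hS : ∀ u v, G.Adj u v → (u ∈ S ↔ v ∉ S))
    (hno : ¬∃ f : V → Fin 3, (∀ u v, G.Adj u v → f u ≠ f v) ∧ ∀ x ∈ X, f x = c x)
    (hcard : X.card = 3) (hXS : ∀ v ∈ X, v ∈ S) (hinj : Set.InjOn c X) :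
    ∃ x y z : V, x ≠ y ∧ y ≠ z ∧ x ≠ z ∧ X = {x, y, z} ∧
      (x ∈ S ∧ y ∈ S ∧ z ∈ S) ∧
      c x ≠ c y ∧ c y ≠ c z ∧ c x ≠ c z ∧
      (∃ w, G.Adj x w ∧ G.Adj y w) ∧ (∃ w, G.Adj y w ∧ G.Adj z w) ∧
      (∃ w, G.Adj x w ∧ G.Adj z w) := by
  obtain ⟨x, y, z, hxy, hxz, hyz, hXeq⟩ := Finset.card_eq_three.mp hcard
  have hxX : x ∈ X := by rw [hXeq]; simp
  have hyX : y ∈ X := by rw [hXeq]; simp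
  have hzX : z ∈ X := by rw [hXeq]; simp
  have cxy : c x ≠ c y := fun h => hxy (hinj hxX hyX h)
  have cyz : c y ≠ c z := fun h => hyz (hinj hyX hzX h)
  have cxz : c x ≠ c z := fun h => hxz (hinj hxX hzX h)
  have hmem : ∀ w ∈ X, w = x ∨ w = y ∨ w = z := by
    intro w hw; rw [hXeq] at hw; simpa using hw
  refine ⟨x, y, z, hxy, hyz, hxz, hXeq, ⟨hXS x hxX, hXS y hyX, hXS z hzX⟩, cxy, cyz, cxz,
    ?_, ?_, ?_⟩
  · by_contra hcom
    obtain ⟨f, hf, hfx, hfy, hfz⟩ := aux_ext G c (· ∈ S) hS x y z (hXS x hxX) (hXS y hyX)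
      (hXS z hzX) cxy cyz cxz hcom
    exact hno ⟨f, hf, fun w hw => by rcases hmem w hw with h | h | h <;> subst h <;> assumption⟩
  · by_contra hcom
    obtain ⟨f, hf, hfy, hfz, hfx⟩ := aux_ext G c (· ∈ S) hS y z x (hXS y hyX) (hXS z hzX)
      (hXS x hxX) cyz cxz.symm cxy.symm hcom
    exact hno ⟨f, hf, fun w hw => by rcases hmem w hw with h | h | h <;> subst h <;> assumption⟩
  · by_contra hcom
    obtain ⟨f, hf, hfx, hfz, hfy⟩ := aux_ext G c (· ∈ S) hS x z y (hXS x hxX) (hXS z hzX)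
      (hXS y hyX) cxz cyz.symm cxy hcom
    exact hno ⟨f, hf, fun w hw => by rcases hmem w hw with h | h | h <;> subst h <;> assumption⟩

theorem stmt_0 {V : Type*} [DecidableEq V] (G : SimpleGraph V) (A B : Set V)
    (hcover : ∀ v, v ∈ A ∨ v ∈ B) (hdisj : ∀ v, ¬(v ∈ A ∧ v ∈ B))
    (hbip : ∀ u v, G.Adj u v → (u ∈ A ∧ v ∈ B) ∨ (u ∈ B ∧ v ∈ A))
    (X : Finset V) (hX : X.card ≤ 3) (c : V → Fin 3)
    (hc : ∀ u ∈ X, ∀ v ∈ X, G.Adj u v → c u ≠ c v)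
    (hno : ¬∃ f : V → Fin 3, (∀ u v, G.Adj u v → f u ≠ f v) ∧ ∀ x ∈ X, f x = c x) :
    ∃ x y z : V, x ≠ y ∧ y ≠ z ∧ x ≠ z ∧ X = {x, y, z} ∧
      ((x ∈ A ∧ y ∈ A ∧ z ∈ A) ∨ (x ∈ B ∧ y ∈ B ∧ z ∈ B)) ∧
      c x ≠ c y ∧ c y ≠ c z ∧ c x ≠ c z ∧
      (∃ w, G.Adj x w ∧ G.Adj y w) ∧ (∃ w, G.Adj y w ∧ G.Adj z w) ∧
      (∃ w, G.Adj x w ∧ G.Adj z w) := by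
  classical
  have hSA : ∀ u v, G.Adj u v → (u ∈ A ↔ v ∉ A) := by
    intro u v hadj
    rcases hbip u v hadj with ⟨hu, hv⟩ | ⟨hu, hv⟩
    · exact ⟨fun _ hv' => hdisj v ⟨hv', hv⟩, fun _ => hu⟩
    · constructor
      · intro hu'; exact absurd ⟨hu', hu⟩ (hdisj u)
      · intro h; exact absurd hv h
  have hSB : ∀ u v, G.Adj u v → (u ∈ B ↔ v ∉ B) := by
    intro u v hadj
    rcases hbip u v hadj with ⟨hu, hv⟩ | ⟨hu, hv⟩
    · constructor
      · intro hu'; exact absurd ⟨hu, hu'⟩ (hdisj u)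
      · intro h; exact absurd hv h
    · exact ⟨fun _ hv' => hdisj v ⟨hv, hv'⟩, fun _ => hu⟩
  -- key: for every pair of distinct colors a b, color a is used on X∩B or b is used on X∩A
  have key : ∀ a b : Fin 3, a ≠ b →
      (∃ x ∈ X, x ∈ B ∧ c x = a) ∨ (∃ x ∈ X, x ∈ A ∧ c x = b) := by
    intro a b hab
    by_contra h
    push_neg at h
    obtain ⟨hB, hA⟩ := h
    apply hno
    refine ⟨fun v => if v ∈ X then c v else if v ∈ A then a else b, ?_, fun x hx => by simp [hx]⟩
    intro u v hadj
    by_cases hu : u ∈ X <;> by_cases hv : v ∈ X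
    · simp only [if_pos hu, if_pos hv]
      exact hc u hu v hv hadj
    · simp only [if_pos hu, if_neg hv]
      rcases hbip u v hadj with ⟨huA, hvB⟩ | ⟨huB, hvA⟩
      · rw [if_neg (fun h' => hdisj v ⟨h', hvB⟩)]
        exact hA u hu huA
      · rw [if_pos hvA]
        exact hB u hu huB
    · simp only [if_neg hu, if_pos hv]
      rcases hbip u v hadj with ⟨huA, hvB⟩ | ⟨huB, hvA⟩
      · rw [if_pos huA]
        exact fun h' => hB v hv hvB h'.symm
      · rw [if_neg (fun h' => hdisj u ⟨h', huB⟩)]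
        exact fun h' => hA v hv hvA h'.symm
    · simp only [if_neg hu, if_neg hv]
      rcases hbip u v hadj with ⟨huA, hvB⟩ | ⟨huB, hvA⟩
      · rw [if_pos huA, if_neg (fun h' => hdisj v ⟨h', hvB⟩)]
        exact hab
      · rw [if_neg (fun h' => hdisj u ⟨h', huB⟩), if_pos hvA]
        exact hab.symm
  set FA := X.filter (· ∈ A) with hFA
  set FB := X.filter (· ∈ B) with hFB
  set SA := FA.image c with hSAdef
  set SB := FB.image c with hSBdef
  have key' : ∀ a b : Fin 3, a ≠ b → a ∈ SB ∨ b ∈ SA := by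
    intro a b hab
    rcases key a b hab with ⟨x, hx, hxB, hcx⟩ | ⟨x, hx, hxA, hcx⟩
    · exact Or.inl (Finset.mem_image.mpr ⟨x, Finset.mem_filter.mpr ⟨hx, hxB⟩, hcx⟩)
    · exact Or.inr (Finset.mem_image.mpr ⟨x, Finset.mem_filter.mpr ⟨hx, hxA⟩, hcx⟩)
  have hsum : FA.card + FB.card ≤ 3 := by
    have hd : Disjoint FA FB := by
      rw [Finset.disjoint_left]
      intro v hvA hvB
      exact hdisj v ⟨(Finset.mem_filter.mp hvA).2, (Finset.mem_filter.mp hvB).2⟩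
    calc FA.card + FB.card = (FA ∪ FB).card := (Finset.card_union_of_disjoint hd).symm
      _ ≤ X.card := Finset.card_le_card
          (Finset.union_subset (Finset.filter_subset _ _) (Finset.filter_subset _ _))
      _ ≤ 3 := hX
  have huniv : SA = Finset.univ ∨ SB = Finset.univ := by
    by_contra h
    push_neg at h
    obtain ⟨hSAne, hSBne⟩ := h
    obtain ⟨b, hb⟩ : ∃ b, b ∉ SA := by
      by_contra hh; push_neg at hh; exact hSAne (Finset.eq_univ_iff_forall.mpr hh)
    obtain ⟨a, ha⟩ : ∃ a, a ∉ SB := by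
      by_contra hh; push_neg at hh; exact hSBne (Finset.eq_univ_iff_forall.mpr hh)
    by_cases hab : a = b
    · subst hab
      have hfin : ∀ a : Fin 3, (a + 1 : Fin 3) ≠ a ∧ (a + 2 : Fin 3) ≠ a ∧
          (a + 1 : Fin 3) ≠ a + 2 := by decide
      obtain ⟨h1, h2, h12⟩ := hfin a
      have hmA : ∀ b' : Fin 3, b' ≠ a → b' ∈ SA := by
        intro b' hb'
        rcases key' a b' (Ne.symm hb') with h' | h'
        · exact absurd h' ha
        · exact h'
      have hmB : ∀ a' : Fin 3, a' ≠ a → a' ∈ SB := by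
        intro a' ha'
        rcases key' a' a ha' with h' | h'
        · exact h'
        · exact absurd h' hb
      have h2A : ({a + 1, a + 2} : Finset (Fin 3)) ⊆ SA :=
        Finset.insert_subset (hmA _ h1) (Finset.singleton_subset_iff.mpr (hmA _ h2))
      have h2B : ({a + 1, a + 2} : Finset (Fin 3)) ⊆ SB :=
        Finset.insert_subset (hmB _ h1) (Finset.singleton_subset_iff.mpr (hmB _ h2))
      have hcA : 2 ≤ SA.card := by
        calc 2 = ({a + 1, a + 2} : Finset (Fin 3)).card := (Finset.card_pair h12).symm
          _ ≤ SA.card := Finset.card_le_card h2A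
      have hcB : 2 ≤ SB.card := by
        calc 2 = ({a + 1, a + 2} : Finset (Fin 3)).card := (Finset.card_pair h12).symm
          _ ≤ SB.card := Finset.card_le_card h2B
      have hiA : SA.card ≤ FA.card := Finset.card_image_le
      have hiB : SB.card ≤ FB.card := Finset.card_image_le
      omega
    · rcases key' a b hab with h' | h'
      · exact ha h'
      · exact hb h'
  -- common processing of the two cases
  have main : ∀ (S : Set V), (∀ u v, G.Adj u v → (u ∈ S ↔ v ∉ S)) →
      ((X.filter (· ∈ S)).image c = Finset.univ) →
      ∃ x y z : V, x ≠ y ∧ y ≠ z ∧ x ≠ z ∧ X = {x, y, z} ∧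
        (x ∈ S ∧ y ∈ S ∧ z ∈ S) ∧
        c x ≠ c y ∧ c y ≠ c z ∧ c x ≠ c z ∧
        (∃ w, G.Adj x w ∧ G.Adj y w) ∧ (∃ w, G.Adj y w ∧ G.Adj z w) ∧
        (∃ w, G.Adj x w ∧ G.Adj z w) := by
    intro S hS hU
    have h3 : ((X.filter (· ∈ S)).image c).card = 3 := by rw [hU]; simp
    have hle1 : ((X.filter (· ∈ S)).image c).card ≤ (X.filter (· ∈ S)).card :=
      Finset.card_image_le
    have hle2 : (X.filter (· ∈ S)).card ≤ X.card := Finset.card_filter_le _ _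
    have hXcard : X.card = 3 := le_antisymm hX (by omega)
    have hFeq : X.filter (· ∈ S) = X :=
      Finset.eq_of_subset_of_card_le (Finset.filter_subset _ _) (by omega)
    have hXS : ∀ v ∈ X, v ∈ S := by
      intro v hv
      have hv' : v ∈ X.filter (· ∈ S) := by rw [hFeq]; exact hv
      exact (Finset.mem_filter.mp hv').2
    have hinj' : Set.InjOn c (X.filter (· ∈ S)) :=
      Finset.card_image_iff.mp (by omega)
    have hinj : Set.InjOn c X := by
      rw [← hFeq]
      exact_mod_cast hinj'
    exact aux_side G c X S hS hno hXcard hXS hinj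
  rcases huniv with hU | hU
  · obtain ⟨x, y, z, h1, h2, h3, h4, h5, rest⟩ := main A hSA hU
    exact ⟨x, y, z, h1, h2, h3, h4, Or.inl h5, rest⟩
  · obtain ⟨x, y, z, h1, h2, h3, h4, h5, rest⟩ := main B hSB hU
    exact ⟨x, y, z, h1, h2, h3, h4, Or.inr h5, rest⟩
end

section
/- Let G be a bipartite graph with bipartition (A,B), and let x, y, z be three distinct vertices of A, precolored with colors 1, 2, 3 respectively. If x and y have no common neighbor in G, then the precoloring extends to a proper 3-coloring of G. -/
theorem stmt_1 {V : Type*} (G : SimpleGraph V) (A B : Set V)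
    (hcover : ∀ v, v ∈ A ∨ v ∈ B) (hdisj : ∀ v, ¬(v ∈ A ∧ v ∈ B))
    (hbip : ∀ u v, G.Adj u v → (u ∈ A ∧ v ∈ B) ∨ (u ∈ B ∧ v ∈ A))
    (x y z : V) (hxy : x ≠ y) (hyz : y ≠ z) (hxz : x ≠ z)
    (hxA : x ∈ A) (hyA : y ∈ A) (hzA : z ∈ A)
    (hcommon : ¬∃ w, G.Adj x w ∧ G.Adj y w) :
    ∃ f : V → Fin 3, (∀ u v, G.Adj u v → f u ≠ f v) ∧
      f x = 0 ∧ f y = 1 ∧ f z = 2 := by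
  classical
  refine ⟨fun v => if v = x then 0 else if v = y then 1 else if v ∈ A then 2
    else if G.Adj y v then 0 else 1, ?_, ?_, ?_, ?_⟩
  · -- properness
    have key : ∀ u v, G.Adj u v → u ∈ A → v ∈ B →
        (if u = x then (0:Fin 3) else if u = y then 1 else if u ∈ A then 2
          else if G.Adj y u then 0 else 1) ≠
        (if v = x then 0 else if v = y then 1 else if v ∈ A then 2
          else if G.Adj y v then 0 else 1) := by
      intro u v hadj huA hvB
      have hvx : v ≠ x := fun h => hdisj v ⟨h ▸ hxA, hvB⟩
      have hvy : v ≠ y := fun h => hdisj v ⟨h ▸ hyA, hvB⟩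
      have hvA : v ∉ A := fun h => hdisj v ⟨h, hvB⟩
      simp only [hvx, hvy, hvA, if_false, if_neg]
      by_cases hux : u = x
      · have hny : ¬ G.Adj y v := fun h => hcommon ⟨v, hux ▸ hadj, h⟩
        simp [hux, hny]
      · by_cases huy : u = y
        · have hy : G.Adj y v := huy ▸ hadj
          simp [hux, huy, hy, hxy.symm]
        · simp only [hux, huy, huA, if_true, if_false]
          split <;> decide
    intro u v hadj
    rcases hbip u v hadj with ⟨huA, hvB⟩ | ⟨huB, hvA⟩
    · exact key u v hadj huA hvB
    · exact (key v u hadj.symm hvA huB).symm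
  · simp
  · simp [hxy.symm]
  · simp [hxz.symm, hyz.symm, hzA]
end

section
/- Let k ≥ 2 and let G_k be the graph with vertex set [k] × [k] (where [k] = {0,…,k−1}), with edges of the grid P_k □ P_k, together with the edges joining (0,j) to (k−1, k−j−1) for all j ∈ [k] and the edges joining (j,0) to (k−j−1, k−1) for all j ∈ [k]. Then the set D = {(i,i) : i ∈ [k]} is an odd cycle transversal of G_k, i.e., G_k − D is bipartite. -/
/-- One-directional edge relation of the projective grid graph `G_k`. -/
def gkRel (k : ℕ) (u v : Fin k × Fin k) : Prop :=
  (u.1 = v.1 ∧ (u.2 : ℕ) + 1 = (v.2 : ℕ)) ∨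
  (u.2 = v.2 ∧ (u.1 : ℕ) + 1 = (v.1 : ℕ)) ∨
  ((u.1 : ℕ) = 0 ∧ (v.1 : ℕ) = k - 1 ∧ (u.2 : ℕ) + (v.2 : ℕ) = k - 1) ∨
  ((u.2 : ℕ) = 0 ∧ (v.2 : ℕ) = k - 1 ∧ (u.1 : ℕ) + (v.1 : ℕ) = k - 1)

/-- The projective quadrangulation `G_k`: the grid `P_k □ P_k` with added edges
`(0,j)–(k−1,k−j−1)` and `(j,0)–(k−j−1,k−1)`. -/
def Gk (k : ℕ) : SimpleGraph (Fin k × Fin k) where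
  Adj u v := u ≠ v ∧ (gkRel k u v ∨ gkRel k v u)
  symm := by
    constructor
    intro u v h
    exact ⟨h.1.symm, h.2.symm⟩
  loopless := by
    constructor
    intro u h
    exact h.1 rfl

instance (k : ℕ) : DecidableRel (Gk k).Adj := by
  intro u v
  unfold Gk gkRel
  infer_instance

/-!
Colour an off-diagonal vertex `(i, j)` by the parity of `i + j`, flipped when `i > j`. A grid
edge changes the parity of `i + j` and, avoiding the diagonal, stays on one side of it. A wrap-around
edge `(0, j)–(k-1, k-1-j)` or `(j, 0)–(k-1-j, k-1)` preserves the parity of `i + j` but joins the two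
sides of the diagonal. Either way the two colours differ.
-/

def diagColor (a b : ℕ) : ℕ :=
  (a + b + if a < b then 0 else 1) % 2

lemma diagColor_lt_two (a b : ℕ) : diagColor a b < 2 :=
  Nat.mod_lt _ two_pos

lemma diagColor_eq_iff (a b c d : ℕ) :
    diagColor a b = diagColor c d ↔ ((a + b) % 2 = (c + d) % 2 ↔ (a < b ↔ c < d)) := by
  unfold diagColor
  split_ifs <;> omega

lemma diagColor_ne_of_gkRel {k : ℕ} {u v : Fin k × Fin k} (hu : u.1 ≠ u.2) (hv : v.1 ≠ v.2)
    (h : gkRel k u v) : diagColor u.1 u.2 ≠ diagColor v.1 v.2 := by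
  rw [Ne, diagColor_eq_iff]
  rw [Ne, Fin.ext_iff] at hu hv
  rcases h with ⟨hfst, hstep⟩ | ⟨hsnd, hstep⟩ | hwrap | hwrap
  · rw [Fin.ext_iff] at hfst
    omega
  · rw [Fin.ext_iff] at hsnd
    omega
  · omega
  · omega

theorem stmt_8_general (k : ℕ) :
    ((Gk k).induce {v : Fin k × Fin k | v.1 ≠ v.2}).Colorable 2 := by
  rw [SimpleGraph.colorable_iff_exists_bdd_nat_coloring]
  refine ⟨.mk (fun v => diagColor v.1.1 v.1.2) ?_, fun v => diagColor_lt_two _ _⟩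
  rintro ⟨u, hu⟩ ⟨v, hv⟩ ⟨-, huv | hvu⟩
  · exact diagColor_ne_of_gkRel hu hv huv
  · exact (diagColor_ne_of_gkRel hv hu hvu).symm

theorem stmt_8 (k : ℕ) (hk : 2 ≤ k) :
    ((Gk k).induce {v : Fin k × Fin k | v.1 ≠ v.2}).Colorable 2 :=
  stmt_8_general k
end

section
/- Let k ≥ 2 and let G_k be the graph on [k] × [k] obtained from the grid P_k □ P_k by adding the edges joining (0,j) to (k−1, k−j−1) and (j,0) to (k−j−1, k−1) for all j ∈ [k]. Then every odd cycle transversal of G_k has size at least k. -/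
/-!
Take a proper colouring `f` of `G_k - T` with values in `ZMod 2` and put
`parity f (x, y) = f (x, y) + x + y`. A grid edge joins vertices whose coordinate sums have
opposite parities, so `parity` is constant along grid paths avoiding `T`; a twisted edge
`(i, 0) - (k-1-i, k-1)` joins vertices of equal coordinate parity, so `parity` differs at its
ends. If `|T| < k`, some column `c` misses `T`. For every row `i`, the path along row `i` from
column `0` to `c`, along column `c` to row `k-1-i` and along that row to column `k-1` is closed
by a twisted edge, so `T` meets row `i` left of `c` or row `k-1-i` right of `c`. These zones are
pairwise disjoint, so `T` has at least `k` vertices.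
-/

def SimpleGraph.IsProperColoringOn {V α : Type*} (G : SimpleGraph V) (s : Set V) (f : V → α) :
    Prop :=
  ∀ ⦃u v⦄, u ∈ s → v ∈ s → G.Adj u v → f u ≠ f v

lemma SimpleGraph.Colorable.exists_zmod_two_of_induce {V : Type*} {G : SimpleGraph V} {s : Set V}
    (h : (G.induce s).Colorable 2) : ∃ f : V → ZMod 2, G.IsProperColoringOn s f := by
  classical
  obtain ⟨C⟩ : Nonempty ((G.induce s).Coloring (ZMod 2)) := h
  refine ⟨fun v => if hv : v ∈ s then C ⟨v, hv⟩ else 0, fun u v hu hv huv => ?_⟩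
  simp only [dif_pos hu, dif_pos hv]
  exact C.valid (v := ⟨u, hu⟩) (w := ⟨v, hv⟩) huv

lemma ZMod.add_eq_one_of_ne {x y : ZMod 2} (h : x ≠ y) : x + y = 1 := by
  revert x y
  decide

lemma Finset.exists_forall_notMem_of_card_lt {α β : Type*} [Fintype β] [DecidableEq β]
    {T : Finset (α × β)} (h : T.card < Fintype.card β) : ∃ c, ∀ a, (a, c) ∉ T := by
  obtain ⟨c, -, hc⟩ := exists_mem_notMem_of_card_lt_card (s := T.image Prod.snd) (t := univ)
    (card_image_le.trans_lt h)
  exact ⟨c, fun a ha => hc (mem_image_of_mem Prod.snd ha)⟩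

lemma Fin.apply_eq_apply_of_succ {α : Type*} {k : ℕ} (g : Fin k → α) {a b : Fin k} (hab : a ≤ b)
    (h : ∀ j j' : Fin k, a ≤ j → j' ≤ b → (j : ℕ) + 1 = j' → g j = g j') : g a = g b := by
  suffices ∀ n (hn : n < k), (a : ℕ) ≤ n → n ≤ b → g a = g ⟨n, hn⟩ from this b b.isLt hab le_rfl
  intro n hn han hnb
  induction n, han using Nat.le_induction with
  | base => rfl
  | succ n han ih =>
    exact (ih (by omega) (by omega)).trans (h _ _ (by simp [Fin.le_def, han]) hnb rfl)

namespace Gk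

variable {k : ℕ} {s : Set (Fin k × Fin k)} {f : Fin k × Fin k → ZMod 2}

def parity (f : Fin k × Fin k → ZMod 2) (v : Fin k × Fin k) : ZMod 2 :=
  f v + (v.1 : ℕ) + (v.2 : ℕ)

lemma parity_add_parity (hf : (Gk k).IsProperColoringOn s f) {u v : Fin k × Fin k}
    (hu : u ∈ s) (hv : v ∈ s) (huv : (Gk k).Adj u v) :
    parity f u + parity f v = 1 + ((u.1 + u.2 + v.1 + v.2 : ℕ) : ZMod 2) := by
  unfold parity
  push_cast
  linear_combination ZMod.add_eq_one_of_ne (hf hu hv huv)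

lemma parity_eq_of_odd (hf : (Gk k).IsProperColoringOn s f) {u v : Fin k × Fin k}
    (hu : u ∈ s) (hv : v ∈ s) (huv : (Gk k).Adj u v)
    (hodd : Odd ((u.1 + u.2 + v.1 + v.2 : ℕ))) : parity f u = parity f v :=
  CharTwo.add_eq_zero.1 <| by rw [parity_add_parity hf hu hv huv, hodd.natCast_zmod_two]; rfl

lemma parity_ne_of_even (hf : (Gk k).IsProperColoringOn s f) {u v : Fin k × Fin k}
    (hu : u ∈ s) (hv : v ∈ s) (huv : (Gk k).Adj u v)
    (heven : Even ((u.1 + u.2 + v.1 + v.2 : ℕ))) : parity f u ≠ parity f v := by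
  intro h
  have := parity_add_parity hf hu hv huv
  rw [h, CharTwo.add_self_eq_zero, heven.natCast_zmod_two] at this
  exact absurd this (by decide)

lemma adj_of_snd_succ {i j j' : Fin k} (h : (j : ℕ) + 1 = j') : (Gk k).Adj (i, j) (i, j') :=
  ⟨by simp [Fin.ext_iff]; omega, Or.inl <| Or.inl ⟨rfl, h⟩⟩

lemma adj_of_fst_succ {i i' j : Fin k} (h : (i : ℕ) + 1 = i') : (Gk k).Adj (i, j) (i', j) :=
  ⟨by simp [Fin.ext_iff]; omega, Or.inl <| Or.inr <| Or.inl ⟨rfl, h⟩⟩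

lemma adj_rev (hk : 2 ≤ k) {i j₀ j₁ : Fin k} (h₀ : (j₀ : ℕ) = 0) (h₁ : (j₁ : ℕ) = k - 1) :
    (Gk k).Adj (i, j₀) (i.rev, j₁) :=
  ⟨by simp [Fin.ext_iff]; omega,
    Or.inl <| Or.inr <| Or.inr <| Or.inr ⟨h₀, h₁, by simp only [Fin.val_rev]; omega⟩⟩

lemma parity_eq_of_snd_le (hf : (Gk k).IsProperColoringOn s f) {i a b : Fin k} (hab : a ≤ b)
    (hs : ∀ j, a ≤ j → j ≤ b → (i, j) ∈ s) :
    parity f (i, a) = parity f (i, b) :=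
  Fin.apply_eq_apply_of_succ _ hab fun j j' hj hj' hjj' =>
    parity_eq_of_odd hf (hs j hj (by omega)) (hs j' (by omega) hj') (adj_of_snd_succ hjj')
      ⟨i + j, by dsimp only; omega⟩

lemma parity_eq_of_fst_le (hf : (Gk k).IsProperColoringOn s f) {j a b : Fin k} (hab : a ≤ b)
    (hs : ∀ i, a ≤ i → i ≤ b → (i, j) ∈ s) :
    parity f (a, j) = parity f (b, j) :=
  Fin.apply_eq_apply_of_succ (fun i => parity f (i, j)) hab fun i i' hi hi' hii' =>
    parity_eq_of_odd hf (hs i hi (by omega)) (hs i' (by omega) hi') (adj_of_fst_succ hii')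
      ⟨i + j, by dsimp only; omega⟩

lemma parity_ne_rev (hk : 2 ≤ k) (hf : (Gk k).IsProperColoringOn s f)
    {i j₀ j₁ : Fin k} (h₀ : (j₀ : ℕ) = 0) (h₁ : (j₁ : ℕ) = k - 1) (hu : (i, j₀) ∈ s)
    (hv : (i.rev, j₁) ∈ s) : parity f (i, j₀) ≠ parity f (i.rev, j₁) :=
  parity_ne_of_even hf hu hv (adj_rev hk h₀ h₁) ⟨k - 1, by simp only [Fin.val_rev]; omega⟩

def zone (c i : Fin k) : Set (Fin k × Fin k) :=
  {v | v.1 = i ∧ v.2 < c ∨ v.1 = i.rev ∧ c < v.2}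

lemma disjoint_zone {c i i' : Fin k} (h : i ≠ i') : Disjoint (zone c i) (zone c i') := by
  rw [Set.disjoint_left]
  rintro v (⟨hi, hlt⟩ | ⟨hi, hlt⟩) (⟨hi', hlt'⟩ | ⟨hi', hlt'⟩)
  · exact h (hi.symm.trans hi')
  · exact lt_asymm hlt hlt'
  · exact lt_asymm hlt hlt'
  · exact h (Fin.rev_inj.1 (hi.symm.trans hi'))

lemma exists_notMem_zone (hk : 2 ≤ k) (hf : (Gk k).IsProperColoringOn s f) {c : Fin k}
    (hc : ∀ i, (i, c) ∈ s) (i : Fin k) : ∃ v ∈ zone c i, v ∉ s := by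
  by_contra! h
  have hleft : ∀ j ≤ c, (i, j) ∈ s := fun j hj => by
    rcases hj.lt_or_eq with hj | rfl
    exacts [h _ (Or.inl ⟨rfl, hj⟩), hc i]
  have hright : ∀ j, c ≤ j → (i.rev, j) ∈ s := fun j hj => by
    rcases hj.lt_or_eq with hj | rfl
    exacts [h _ (Or.inr ⟨rfl, hj⟩), hc i.rev]
  let j₀ : Fin k := ⟨0, by omega⟩
  let j₁ : Fin k := ⟨k - 1, by omega⟩
  have hj₀ : j₀ ≤ c := Fin.le_def.2 (Nat.zero_le _)
  have hj₁ : c ≤ j₁ := Fin.le_def.2 (by simp [j₁]; omega)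
  apply parity_ne_rev hk hf rfl rfl (hleft j₀ hj₀) (hright j₁ hj₁)
  calc parity f (i, j₀) = parity f (i, c) :=
        parity_eq_of_snd_le hf hj₀ fun j _ hj => hleft j hj
    _ = parity f (i.rev, c) := by
        rcases le_total i i.rev with hi | hi
        exacts [parity_eq_of_fst_le hf hi fun i _ _ => hc i,
          (parity_eq_of_fst_le hf hi fun i _ _ => hc i).symm]
    _ = parity f (i.rev, j₁) := parity_eq_of_snd_le hf hj₁ fun j hj _ => hright j hj

end Gk

theorem stmt_9 (k : ℕ) (hk : 2 ≤ k) (T : Finset (Fin k × Fin k))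
    (hbip : ((Gk k).induce {v | v ∉ T}).Colorable 2) :
    k ≤ T.card := by
  by_contra! hT
  obtain ⟨c, hc⟩ := Finset.exists_forall_notMem_of_card_lt (β := Fin k) (by simpa using hT)
  obtain ⟨f, hf⟩ := hbip.exists_zmod_two_of_induce
  choose g hgz hgT using Gk.exists_notMem_zone (s := {v | v ∉ T}) hk hf hc
  have hinj : Function.Injective g := fun a b hab => by_contra fun hne =>
    Set.disjoint_left.1 (Gk.disjoint_zone hne) (hgz a) (hab ▸ hgz b)
  have := Finset.card_le_card_of_injOn (s := .univ) g (fun i _ => not_not.1 (hgT i)) hinj.injOn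
  simp only [Finset.card_univ, Fintype.card_fin] at this
  omega
end

section
/- Let k ≥ 2 and let G_k be the graph on [k] × [k] obtained from the grid P_k □ P_k by adding edges joining (0,j) to (k−1, k−j−1) and (j,0) to (k−j−1, k−1) for all j ∈ [k]. Then G_k contains an odd cycle; in particular G_k is not bipartite. -/
/-!
The walk that goes from `(0, 0)` along the first row to `(0, k - 1)` and then along the last
column to `(k - 1, k - 1)` has `2k - 2` edges and visits distinct vertices; the twisted edge
`(0, 0)–(k - 1, k - 1)` (the case `j = 0`) closes it into a cycle of odd length `2k - 1`.
An odd closed walk rules out a 2-colouring.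
-/

open SimpleGraph

def cycleGraph.homOfAdj {V : Type*} {G : SimpleGraph V} {n : ℕ} (f : Fin (n + 2) → V)
    (h : ∀ i, G.Adj (f i) (f (i + 1))) : cycleGraph (n + 2) →g G where
  toFun := f
  map_rel' {u v} huv := by
    rcases cycleGraph_adj.mp huv with huv | huv
    · rw [sub_eq_iff_eq_add'.mp huv]
      exact (h v).symm
    · rw [sub_eq_iff_eq_add'.mp huv]
      exact h u

namespace Gk

def oddCycleVertex (n : ℕ) (i : Fin (2 * n + 3)) : Fin (n + 2) × Fin (n + 2) :=
  (⟨min (i - (n + 1)) (n + 1), by omega⟩, ⟨min i (n + 1), by omega⟩)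

lemma oddCycleVertex_injective (n : ℕ) : Function.Injective (oddCycleVertex n) := by
  intro i j h
  simp only [oddCycleVertex, Prod.mk.injEq, Fin.mk.injEq] at h
  omega

lemma adj_oddCycleVertex_add_one (n : ℕ) (i : Fin (2 * n + 3)) :
    (Gk (n + 2)).Adj (oddCycleVertex n i) (oddCycleVertex n (i + 1)) := by
  refine ⟨(oddCycleVertex_injective n).ne (by simp), ?_⟩
  unfold gkRel oddCycleVertex
  rcases (Fin.le_last i).lt_or_eq with hi | rfl
  · left
    simp only [Fin.ext_iff, Fin.val_add_one_of_lt hi]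
    omega
  · right
    simp only [Fin.last_add_one, Fin.val_zero, Fin.val_last]
    omega

lemma cycleGraph_isContained (n : ℕ) : cycleGraph (2 * n + 3) ⊑ Gk (n + 2) :=
  ⟨(cycleGraph.homOfAdj (oddCycleVertex n) (adj_oddCycleVertex_add_one n)).toCopy
    (oddCycleVertex_injective n)⟩

end Gk

theorem stmt_10 (k : ℕ) (hk : 2 ≤ k) :
    (∃ (v : Fin k × Fin k) (c : (Gk k).Walk v v), c.IsCycle ∧ Odd c.length) ∧
      ¬(Gk k).Colorable 2 := by
  obtain ⟨n, rfl⟩ : ∃ n, k = n + 2 := ⟨k - 2, by omega⟩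
  obtain ⟨v, c, hc, hlen⟩ := (cycleGraph_isContained_iff (by omega)).mp
    (Gk.cycleGraph_isContained n)
  have hodd : Odd c.length := hlen ▸ ⟨n + 1, by ring⟩
  exact ⟨⟨v, c, hc, hodd⟩, fun hcol ↦
    Nat.not_even_iff_odd.mpr hodd (two_colorable_iff_forall_loop_even.mp hcol v c)⟩
end

section
/- Let k ≥ 2 be even and let G_k be the graph on [k] × [k] defined from the grid P_k □ P_k with added edges (0,j)–(k−1,k−j−1) and (j,0)–(k−j−1,k−1) for j ∈ [k]. Then the independence number of G_k equals (k² − k)/2. -/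
/-!
Write `k = 2m`. Every row and every column of an independent set `I` is an independent set of
the path on `2m` vertices, so it has at most `m` vertices; a full one (with `m` vertices) consists
of the odd positions if it misses position `0`, and of the even positions if it misses `2m - 1`.
If `|I| > 2m² - m`, more than `m` rows and more than `m` columns are full. Two consecutive full
rows cannot both meet column `0`, which gives a full row `A` on the odd columns. By pigeonhole
there are full columns `x` and `y = 2m - 1 - x`; the twisted edges `(0, x)–(2m - 1, y)` and
`(0, y)–(2m - 1, x)` force them to carry the same pattern, so `(A, x) ∈ I ↔ (A, y) ∈ I`,
contradicting that `x` and `y` have opposite parities.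

An independent set of size `2m² - m` is the checkerboard below the antidiagonal together with
the opposite checkerboard above it: the point reflection `(i, j) ↦ (2m-1-i, 2m-1-j)` maps it onto
its complement minus the antidiagonal.
-/

open Finset

def IsPathIndep (n : ℕ) (S : Finset ℕ) : Prop :=
  S ⊆ range n ∧ ∀ j ∈ S, j + 1 ∉ S

namespace IsPathIndep

variable {n m : ℕ} {S T : Finset ℕ}

theorem injOn_div_two (hS : IsPathIndep n S) : Set.InjOn (· / 2) S := by
  intro a ha b hb hab
  have := hS.2 a ha
  have := hS.2 b hb
  by_contra hne
  obtain rfl | rfl : b = a + 1 ∨ a = b + 1 := by simp only at hab; omega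
  all_goals contradiction

theorem image_div_two_subset (hS : IsPathIndep (2 * m) S) : S.image (· / 2) ⊆ range m := by
  intro t ht
  obtain ⟨j, hj, rfl⟩ := mem_image.1 ht
  have := mem_range.1 (hS.1 hj)
  exact mem_range.2 (by omega)

theorem card_le (hS : IsPathIndep (2 * m) S) : #S ≤ m := by
  simpa [card_image_of_injOn hS.injOn_div_two] using card_le_card hS.image_div_two_subset

theorem mem_iff_notMem_succ (hS : IsPathIndep (2 * m) S) (hc : #S = m) {t : ℕ}
    (ht : t < m) : 2 * t ∈ S ↔ 2 * t + 1 ∉ S := by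
  have himage : S.image (· / 2) = range m :=
    eq_of_subset_of_card_le hS.image_div_two_subset
      (by rw [card_image_of_injOn hS.injOn_div_two, hc, card_range])
  obtain ⟨j, hj, hjt⟩ := mem_image.1 (himage ▸ mem_range.2 ht : t ∈ S.image (· / 2))
  refine ⟨hS.2 _, fun h => ?_⟩
  obtain rfl | rfl : j = 2 * t ∨ j = 2 * t + 1 := by omega
  exacts [hj, absurd hj h]

theorem odd_mem_of_le (hS : IsPathIndep (2 * m) S) (hc : #S = m) {a b : ℕ}
    (ha : 2 * a + 1 ∈ S) (hab : a ≤ b) (hb : b < m) : 2 * b + 1 ∈ S := by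
  induction b, hab using Nat.le_induction with
  | base => exact ha
  | succ b _ ih =>
    have h := hS.2 _ (ih (by omega))
    by_contra h'
    exact h ((hS.mem_iff_notMem_succ hc hb).2 h')

theorem mem_iff_odd_iff (hS : IsPathIndep (2 * m) S) (hc : #S = m) {j : ℕ}
    (hj : j < 2 * m) : j ∈ S ↔ (Odd j ↔ 2 * (j / 2) + 1 ∈ S) := by
  have ht : j / 2 < m := by omega
  rcases Nat.even_or_odd' j with ⟨t, rfl | rfl⟩
  · simpa [show ¬Odd (2 * t) by simp [Nat.odd_iff]] using hS.mem_iff_notMem_succ hc ht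
  · simp [show (2 * t + 1) / 2 = t by omega]

theorem eq_filter_odd (hS : IsPathIndep (2 * m) S) (hc : #S = m) (h0 : 0 ∉ S) :
    S = (range (2 * m)).filter Odd := by
  have hodd {t : ℕ} (ht : t < m) : 2 * t + 1 ∈ S :=
    hS.odd_mem_of_le hc (a := 0)
      (by simpa using mt (hS.mem_iff_notMem_succ hc (t := 0) (by omega)).2 (by simpa using h0))
      t.zero_le ht
  ext j
  simp only [mem_filter, mem_range]
  refine ⟨fun hj => ?_, fun ⟨hj, hj'⟩ => ?_⟩
  · have hj' := mem_range.1 (hS.1 hj)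
    exact ⟨hj', ((hS.mem_iff_odd_iff hc hj').1 hj).2 (hodd (by omega))⟩
  · exact (hS.mem_iff_odd_iff hc hj).2 (iff_of_true hj' (hodd (by omega)))

theorem eq_filter_even (hS : IsPathIndep (2 * m) S) (hc : #S = m) (hl : 2 * m - 1 ∉ S) :
    S = (range (2 * m)).filter Even := by
  have hodd {t : ℕ} (ht : t < m) : 2 * t + 1 ∉ S := fun h =>
    hl (by simpa [show 2 * (m - 1) + 1 = 2 * m - 1 by omega] using
      hS.odd_mem_of_le hc h (b := m - 1) (by omega) (by omega))
  ext j
  simp only [mem_filter, mem_range, ← Nat.not_odd_iff_even]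
  refine ⟨fun hj => ?_, fun ⟨hj, hj'⟩ => ?_⟩
  · have hj' := mem_range.1 (hS.1 hj)
    exact ⟨hj', fun h => hodd (t := j / 2) (by omega) (((hS.mem_iff_odd_iff hc hj').1 hj).1 h)⟩
  · exact (hS.mem_iff_odd_iff hc hj).2 (iff_of_false hj' (hodd (by omega)))

theorem eq_of_twisted (hS : IsPathIndep (2 * m) S) (hT : IsPathIndep (2 * m) T)
    (hcS : #S = m) (hcT : #T = m) (hST : 0 ∈ S → 2 * m - 1 ∉ T)
    (hTS : 0 ∈ T → 2 * m - 1 ∉ S) : S = T := by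
  have of_zero_mem {S T : Finset ℕ} (hS : IsPathIndep (2 * m) S) (hT : IsPathIndep (2 * m) T)
      (hcS : #S = m) (hcT : #T = m) (hST : 0 ∈ S → 2 * m - 1 ∉ T)
      (hTS : 0 ∈ T → 2 * m - 1 ∉ S) (h0 : 0 ∈ S) : S = T := by
    have hT' := hT.eq_filter_even hcT (hST h0)
    have hm := mem_range.1 (hS.1 h0)
    rw [hS.eq_filter_even hcS (hTS (by simp [hT', hm])), hT']
  by_cases h0S : 0 ∈ S
  · exact of_zero_mem hS hT hcS hcT hST hTS h0S
  by_cases h0T : 0 ∈ T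
  · exact (of_zero_mem hT hS hcT hcS hTS hST h0T).symm
  rw [hS.eq_filter_odd hcS h0S, hT.eq_filter_odd hcT h0T]

end IsPathIndep

theorem Finset.exists_mem_add_eq_of_card_lt {m : ℕ} {F : Finset ℕ} (hF : F ⊆ range (2 * m))
    (hc : m < #F) : ∃ x ∈ F, ∃ y ∈ F, x + y = 2 * m - 1 := by
  have hmaps : Set.MapsTo (fun x => min x (2 * m - 1 - x)) F (range m) := fun x hx => by
    have := mem_range.1 (hF hx)
    exact mem_range.2 (show min x (2 * m - 1 - x) < m by omega)
  obtain ⟨x, hx, y, hy, hne, hxy⟩ :=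
    exists_ne_map_eq_of_card_lt_of_maps_to (by simpa using hc) hmaps
  have := mem_range.1 (hF hx)
  have := mem_range.1 (hF hy)
  exact ⟨x, hx, y, hy, by omega⟩

theorem Finset.card_lt_card_filter_eq_add {ι : Type*} {s : Finset ι} {f : ι → ℕ} {m r : ℕ}
    (hf : ∀ i ∈ s, f i ≤ m) (hsum : #s * m < ∑ i ∈ s, f i + r) :
    #s < #{i ∈ s | f i = m} + r := by
  have hdeficit : ∑ i ∈ s, f i + #{i ∈ s | ¬f i = m} ≤ #s * m := by
    rw [card_filter, ← sum_add_distrib, card_eq_sum_ones, sum_mul, one_mul]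
    refine sum_le_sum fun i hi => ?_
    have := hf i hi
    split_ifs <;> omega
  have := card_filter_add_card_filter_not (s := s) (fun i => f i = m)
  omega

namespace Finset

variable {J : Finset (ℕ × ℕ)} {n : ℕ}

def row (J : Finset (ℕ × ℕ)) (i : ℕ) : Finset ℕ := (J.filter (·.1 = i)).image Prod.snd

def col (J : Finset (ℕ × ℕ)) (j : ℕ) : Finset ℕ := (J.filter (·.2 = j)).image Prod.fst

@[simp] theorem mem_row {i j : ℕ} : j ∈ J.row i ↔ (i, j) ∈ J := by
  simp [row]

@[simp] theorem mem_col {i j : ℕ} : i ∈ J.col j ↔ (i, j) ∈ J := by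
  simp [col]

theorem sum_card_row (hJ : J ⊆ range n ×ˢ range n) : ∑ i ∈ range n, #(J.row i) = #J := by
  rw [card_eq_sum_card_fiberwise (f := Prod.fst) fun p hp => (mem_product.1 (hJ hp)).1]
  refine sum_congr rfl fun i _ => card_image_of_injOn fun p hp q hq h => ?_
  exact Prod.ext ((mem_filter.1 hp).2.trans (mem_filter.1 hq).2.symm) h

theorem sum_card_col (hJ : J ⊆ range n ×ˢ range n) : ∑ j ∈ range n, #(J.col j) = #J := by
  rw [card_eq_sum_card_fiberwise (f := Prod.snd) fun p hp => (mem_product.1 (hJ hp)).2]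
  refine sum_congr rfl fun j _ => card_image_of_injOn fun p hp q hq h => ?_
  exact Prod.ext h ((mem_filter.1 hp).2.trans (mem_filter.1 hq).2.symm)

theorem isPathIndep_row (hJ : J ⊆ range n ×ˢ range n) (hrow : ∀ i j, (i, j) ∈ J → (i, j + 1) ∉ J)
    (i : ℕ) : IsPathIndep n (J.row i) :=
  ⟨fun j hj => (mem_product.1 (hJ (mem_row.1 hj))).2, fun j hj => by simpa using hrow i j (mem_row.1 hj)⟩

theorem isPathIndep_col (hJ : J ⊆ range n ×ˢ range n) (hcol : ∀ i j, (i, j) ∈ J → (i + 1, j) ∉ J)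
    (j : ℕ) : IsPathIndep n (J.col j) :=
  ⟨fun i hi => (mem_product.1 (hJ (mem_col.1 hi))).1, fun i hi => by simpa using hcol i j (mem_col.1 hi)⟩

theorem card_le_of_twisted_grid {m : ℕ} (hJ : J ⊆ range (2 * m) ×ˢ range (2 * m))
    (hrow : ∀ i j, (i, j) ∈ J → (i, j + 1) ∉ J) (hcol : ∀ i j, (i, j) ∈ J → (i + 1, j) ∉ J)
    (htwist : ∀ x y, x + y = 2 * m - 1 → (0, x) ∈ J → (2 * m - 1, y) ∉ J) :
    #J ≤ 2 * m * m - m := by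
  by_contra! hJm
  have hrowP := isPathIndep_row hJ hrow
  have hcolP := isPathIndep_col hJ hcol
  have many_full {f : ℕ → ℕ} (hf : ∀ i, f i ≤ m) (hsum : ∑ i ∈ range (2 * m), f i = #J) :
      m < #{i ∈ range (2 * m) | f i = m} := by
    have := card_lt_card_filter_eq_add (r := m) (fun i _ => hf i) (by rw [card_range, hsum]; omega)
    rw [card_range] at this
    omega
  have hR := many_full (fun i => (hrowP i).card_le) (sum_card_row hJ)
  have hC := many_full (fun j => (hcolP j).card_le) (sum_card_col hJ)
  obtain ⟨i, hi, hi'⟩ : ∃ i ∈ {i ∈ range (2 * m) | #(J.row i) = m},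
      i + 1 ∈ {i ∈ range (2 * m) | #(J.row i) = m} := by
    by_contra! h
    exact (IsPathIndep.card_le ⟨filter_subset _ _, h⟩).not_gt hR
  rw [mem_filter] at hi hi'
  obtain ⟨A, hA⟩ : ∃ A, J.row A = (range (2 * m)).filter Odd := by
    by_cases h0 : 0 ∈ J.row i
    · exact ⟨i + 1, (hrowP _).eq_filter_odd hi'.2 fun h => hcol i 0 (mem_row.1 h0) (mem_row.1 h)⟩
    · exact ⟨i, (hrowP _).eq_filter_odd hi.2 h0⟩
  obtain ⟨x, hx, y, hy, hxy⟩ := exists_mem_add_eq_of_card_lt (filter_subset _ _) hC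
  rw [mem_filter] at hx hy
  have hcols : J.col x = J.col y :=
    (hcolP x).eq_of_twisted (hcolP y) hx.2 hy.2
      (fun h0 hl => htwist x y hxy (mem_col.1 h0) (mem_col.1 hl))
      (fun h0 hl => htwist y x (by omega) (mem_col.1 h0) (mem_col.1 hl))
  have hAxy : (A, x) ∈ J ↔ (A, y) ∈ J := by rw [← mem_col, ← mem_col, hcols]
  simp only [← mem_row, hA, mem_filter, mem_range, Nat.odd_iff] at hAxy
  rw [mem_range] at hx hy
  omega

end Finset

theorem eq_of_gkRel_of_isIndepSet {k : ℕ} {s : Set (Fin k × Fin k)} (hs : (Gk k).IsIndepSet s)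
    {a b : Fin k × Fin k} (ha : a ∈ s) (hb : b ∈ s) (h : gkRel k a b) : a = b :=
  by_contra fun hne => hs ha hb hne ⟨hne, Or.inl h⟩

theorem card_le_of_isIndepSet {m : ℕ} {I : Finset (Fin (2 * m) × Fin (2 * m))}
    (hI : (Gk (2 * m)).IsIndepSet ↑I) : #I ≤ 2 * m * m - m := by
  set J := I.map (Fin.valEmbedding.prodMap Fin.valEmbedding)
  have mem_J {p : ℕ × ℕ} (hp : p ∈ J) :
      ∃ a ∈ I, (a.1 : ℕ) = p.1 ∧ (a.2 : ℕ) = p.2 := by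
    obtain ⟨a, ha, rfl⟩ := mem_map.1 hp
    exact ⟨a, ha, rfl, rfl⟩
  have hJ : J ⊆ range (2 * m) ×ˢ range (2 * m) := fun p hp => by
    obtain ⟨a, -, h1, h2⟩ := mem_J hp
    exact mem_product.2 ⟨mem_range.2 (h1 ▸ a.1.2), mem_range.2 (h2 ▸ a.2.2)⟩
  have forbidden {p q : ℕ × ℕ} (hp : p ∈ J) (hq : q ∈ J) (hpq : p ≠ q)
      (hrel : (p.1 = q.1 ∧ p.2 + 1 = q.2) ∨ (p.2 = q.2 ∧ p.1 + 1 = q.1) ∨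
        (p.1 = 0 ∧ q.1 = 2 * m - 1 ∧ p.2 + q.2 = 2 * m - 1)) : False := by
    obtain ⟨a, ha, ha1, ha2⟩ := mem_J hp
    obtain ⟨b, hb, hb1, hb2⟩ := mem_J hq
    have hab := eq_of_gkRel_of_isIndepSet hI ha hb (by
      simp only [gkRel, Fin.ext_iff]
      omega)
    subst hab
    exact hpq (Prod.ext (ha1.symm.trans hb1) (ha2.symm.trans hb2))
  rw [← card_map]
  refine card_le_of_twisted_grid hJ (fun i j h h' => forbidden h h' (by simp) (by omega))
    (fun i j h h' => forbidden h h' (by simp) (by omega)) (fun x y hxy h h' => ?_)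
  have hx := mem_range.1 (mem_product.1 (hJ h)).2
  exact forbidden h h' (by simp only [ne_eq, Prod.mk.injEq]; omega) (by omega)

def flippedChecker (m : ℕ) : Finset (Fin (2 * m) × Fin (2 * m)) :=
  univ.filter fun v => ((v.1 : ℕ) + v.2) % 2 = 1 ∧ (v.1 : ℕ) + v.2 + 1 < 2 * m ∨
    ((v.1 : ℕ) + v.2) % 2 = 0 ∧ 2 * m ≤ (v.1 : ℕ) + v.2

theorem isIndepSet_flippedChecker (m : ℕ) : (Gk (2 * m)).IsIndepSet ↑(flippedChecker m) := by
  rintro u hu v hv - ⟨-, hrel⟩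
  simp only [flippedChecker, coe_filter, mem_univ, true_and, Set.mem_ofPred_eq] at hu hv
  simp only [gkRel, Fin.ext_iff] at hrel
  omega

theorem card_antidiagonal_fin (n : ℕ) : #{v : Fin n × Fin n | (v.1 : ℕ) + v.2 + 1 = n} = n := by
  have h : ({v : Fin n × Fin n | (v.1 : ℕ) + v.2 + 1 = n} : Finset _) =
      univ.image fun i => (i, i.rev) := by
    ext ⟨i, j⟩
    simp only [mem_filter, mem_univ, true_and, mem_image, Prod.mk.injEq, exists_eq_left]
    rw [Fin.ext_iff, Fin.val_rev]
    omega
  rw [h, card_image_of_injective _ fun _ _ h => (Prod.ext_iff.1 h).1, card_univ, Fintype.card_fin]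

theorem card_flippedChecker (m : ℕ) : #(flippedChecker m) = 2 * m * m - m := by
  set ρ := (Fin.revPerm.prodCongr Fin.revPerm : Equiv.Perm (Fin (2 * m) × Fin (2 * m)))
  have hρ (v : Fin (2 * m) × Fin (2 * m)) : ρ.symm v = (v.1.rev, v.2.rev) := rfl
  set D : Finset (Fin (2 * m) × Fin (2 * m)) := {v | (v.1 : ℕ) + v.2 + 1 = 2 * m}
  have hcompl : (flippedChecker m)ᶜ = (flippedChecker m).map ρ.toEmbedding ∪ D := by
    ext v
    simp only [mem_compl, mem_union, mem_map_equiv, hρ, flippedChecker, D, mem_filter, mem_univ,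
      true_and, Fin.val_rev]
    omega
  have hdisj : Disjoint ((flippedChecker m).map ρ.toEmbedding) D := by
    refine disjoint_left.2 fun v hv hD => ?_
    simp only [mem_map_equiv, hρ, flippedChecker, D, mem_filter, mem_univ, true_and,
      Fin.val_rev] at hv hD
    omega
  have h := card_compl (flippedChecker m)
  rw [hcompl, card_union_of_disjoint hdisj, card_map, card_antidiagonal_fin, Fintype.card_prod,
    Fintype.card_fin] at h
  have : 2 * m * (2 * m) = 2 * (2 * m * m) := by ring
  omega

theorem stmt_12_general (k : ℕ) (hkeven : Even k) :
    (∃ I : Finset (Fin k × Fin k), (∀ u ∈ I, ∀ v ∈ I, ¬(Gk k).Adj u v) ∧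
        I.card = (k ^ 2 - k) / 2) ∧
      ∀ I : Finset (Fin k × Fin k), (∀ u ∈ I, ∀ v ∈ I, ¬(Gk k).Adj u v) →
        I.card ≤ (k ^ 2 - k) / 2 := by
  obtain ⟨m, rfl⟩ := hkeven.two_dvd
  have hbound : ((2 * m) ^ 2 - 2 * m) / 2 = 2 * m * m - m := by
    have : (2 * m) ^ 2 = 2 * (2 * m * m) := by ring
    omega
  rw [hbound]
  refine ⟨⟨flippedChecker m, fun u hu v hv h => isIndepSet_flippedChecker m hu hv h.ne h,
    card_flippedChecker m⟩, fun I hI => card_le_of_isIndepSet fun u hu v hv _ => hI u hu v hv⟩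

theorem stmt_12 (k : ℕ) (hk : 2 ≤ k) (hkeven : Even k) :
    (∃ I : Finset (Fin k × Fin k), (∀ u ∈ I, ∀ v ∈ I, ¬(Gk k).Adj u v) ∧
        I.card = (k ^ 2 - k) / 2) ∧
      ∀ I : Finset (Fin k × Fin k), (∀ u ∈ I, ∀ v ∈ I, ¬(Gk k).Adj u v) →
        I.card ≤ (k ^ 2 - k) / 2 :=
  stmt_12_general k hkeven
end
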